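/- Let A : ℝ⁷ → ℝ⁷ be an invertible linear map satisfying A*φ₀ = φ₀. Then A also satisfies A*(*φ₀) = *φ₀; that is, the subgroup of GL(7,ℝ) preserving the 3-form φ₀ also preserves the 4-form *φ₀. -/

import Mathlib

open scoped RealInnerProductSpace

noncomputable section

/-- ℝ⁷ with its standard Euclidean inner product. -/
abbrev E7 := EuclideanSpace ℝ (Fin 7)

/-- The coordinate 3-form dx_i ∧ dx_j ∧ dx_k on ℝ⁷ (indices 0,…,6 for x₁,…,x₇). -/
def tri7 (i j k : Fin 7) (u v w : E7) : ℝ :=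
  Matrix.det !![u i, u j, u k; v i, v j, v k; w i, w j, w k]

/-- The G₂ 3-form φ₀ = dx₁₂₃ + dx₁₄₅ + dx₁₆₇ + dx₂₄₆ − dx₂₅₇ − dx₃₄₇ − dx₃₅₆. -/
def phi0 (u v w : E7) : ℝ :=
  tri7 0 1 2 u v w + tri7 0 3 4 u v w + tri7 0 5 6 u v w + tri7 1 3 5 u v w
    - tri7 1 4 6 u v w - tri7 2 3 6 u v w - tri7 2 4 5 u v w

/-- The coordinate 4-form dx_i ∧ dx_j ∧ dx_k ∧ dx_l on ℝ⁷. -/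
def quad7 (i j k l : Fin 7) (a b c d : E7) : ℝ :=
  Matrix.det !![a i, a j, a k, a l; b i, b j, b k, b l;
                c i, c j, c k, c l; d i, d j, d k, d l]

/-- The 4-form *φ₀ = dx₄₅₆₇ + dx₂₃₆₇ + dx₂₃₄₅ + dx₁₃₅₇ − dx₁₃₄₆ − dx₁₂₅₆ − dx₁₂₄₇. -/
def starphi0 (a b c d : E7) : ℝ :=
  quad7 3 4 5 6 a b c d + quad7 1 2 5 6 a b c d + quad7 1 2 3 4 a b c d
    + quad7 0 2 4 6 a b c d - quad7 0 2 3 5 a b c d - quad7 0 1 4 5 a b c d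
    - quad7 0 1 3 6 a b c d

/-! ### Auxiliary material: the 7-dimensional cross product associated with φ₀. -/

/-- The cross product on ℝ⁷ determined by `⟪cross u v, w⟫ = phi0 u v w`. -/
def cross (u v : E7) : E7 :=
  WithLp.toLp 2 ![u 1 * v 2 - u 2 * v 1 + u 3 * v 4 - u 4 * v 3 + u 5 * v 6 - u 6 * v 5,
    -(u 0 * v 2) + u 2 * v 0 + u 3 * v 5 - u 4 * v 6 - u 5 * v 3 + u 6 * v 4,
    u 0 * v 1 - u 1 * v 0 - u 3 * v 6 - u 4 * v 5 + u 5 * v 4 + u 6 * v 3,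
    -(u 0 * v 4) - u 1 * v 5 + u 2 * v 6 + u 4 * v 0 + u 5 * v 1 - u 6 * v 2,
    u 0 * v 3 + u 1 * v 6 + u 2 * v 5 - u 3 * v 0 - u 5 * v 2 - u 6 * v 1,
    -(u 0 * v 6) + u 1 * v 3 - u 2 * v 4 - u 3 * v 1 + u 4 * v 2 + u 6 * v 0,
    u 0 * v 5 - u 1 * v 4 - u 2 * v 3 + u 3 * v 2 + u 4 * v 1 - u 5 * v 0]

lemma cross_apply_0 (u v : E7) : cross u v 0 = u 1 * v 2 - u 2 * v 1 + u 3 * v 4 - u 4 * v 3 + u 5 * v 6 - u 6 * v 5 := rfl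
lemma cross_apply_1 (u v : E7) : cross u v 1 = -(u 0 * v 2) + u 2 * v 0 + u 3 * v 5 - u 4 * v 6 - u 5 * v 3 + u 6 * v 4 := rfl
lemma cross_apply_2 (u v : E7) : cross u v 2 = u 0 * v 1 - u 1 * v 0 - u 3 * v 6 - u 4 * v 5 + u 5 * v 4 + u 6 * v 3 := rfl
lemma cross_apply_3 (u v : E7) : cross u v 3 = -(u 0 * v 4) - u 1 * v 5 + u 2 * v 6 + u 4 * v 0 + u 5 * v 1 - u 6 * v 2 := rfl
lemma cross_apply_4 (u v : E7) : cross u v 4 = u 0 * v 3 + u 1 * v 6 + u 2 * v 5 - u 3 * v 0 - u 5 * v 2 - u 6 * v 1 := rfl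
lemma cross_apply_5 (u v : E7) : cross u v 5 = -(u 0 * v 6) + u 1 * v 3 - u 2 * v 4 - u 3 * v 1 + u 4 * v 2 + u 6 * v 0 := rfl
lemma cross_apply_6 (u v : E7) : cross u v 6 = u 0 * v 5 - u 1 * v 4 - u 2 * v 3 + u 3 * v 2 + u 4 * v 1 - u 5 * v 0 := rfl

lemma inner7 (x y : E7) : ⟪x, y⟫ = x 0 * y 0 + x 1 * y 1 + x 2 * y 2 + x 3 * y 3
    + x 4 * y 4 + x 5 * y 5 + x 6 * y 6 := by
  simp [PiLp.inner_apply, RCLike.inner_apply, Fin.sum_univ_seven]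
  ring

lemma det4 (M : Matrix (Fin 4) (Fin 4) ℝ) : M.det =
    M 0 0 * (M 1 1 * (M 2 2 * M 3 3 - M 2 3 * M 3 2) - M 1 2 * (M 2 1 * M 3 3 - M 2 3 * M 3 1) + M 1 3 * (M 2 1 * M 3 2 - M 2 2 * M 3 1))
  - M 0 1 * (M 1 0 * (M 2 2 * M 3 3 - M 2 3 * M 3 2) - M 1 2 * (M 2 0 * M 3 3 - M 2 3 * M 3 0) + M 1 3 * (M 2 0 * M 3 2 - M 2 2 * M 3 0))
  + M 0 2 * (M 1 0 * (M 2 1 * M 3 3 - M 2 3 * M 3 1) - M 1 1 * (M 2 0 * M 3 3 - M 2 3 * M 3 0) + M 1 3 * (M 2 0 * M 3 1 - M 2 1 * M 3 0))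
  - M 0 3 * (M 1 0 * (M 2 1 * M 3 2 - M 2 2 * M 3 1) - M 1 1 * (M 2 0 * M 3 2 - M 2 2 * M 3 0) + M 1 2 * (M 2 0 * M 3 1 - M 2 1 * M 3 0)) := by
  rw [Matrix.det_succ_row_zero]
  simp [Fin.sum_univ_succ, Matrix.det_fin_three, Matrix.submatrix, Fin.succAbove,
    show (Fin.succ 2 : Fin 4) = 3 from rfl, show (Fin.castSucc 2 : Fin 4) = 2 from rfl,
    show ((1:Fin 4) < 3) = True from by decide, show (Fin.succ 1 : Fin 4) = 2 from rfl,
    show (Fin.castSucc 1 : Fin 4) = 1 from rfl]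
  ring

lemma inner_cross_phi (u v w : E7) : ⟪cross u v, w⟫ = phi0 u v w := by
  simp only [inner7, cross_apply_0, cross_apply_1, cross_apply_2, cross_apply_3,
    cross_apply_4, cross_apply_5, cross_apply_6, phi0, tri7, Matrix.det_fin_three,
    Matrix.cons_val_zero, Matrix.cons_val_one, Matrix.head_cons, Matrix.cons_val_two,
    Matrix.tail_cons, Matrix.head_fin_const, Matrix.of_apply, Matrix.cons_val', Matrix.empty_val',
    Matrix.cons_val_fin_one]
  ring

lemma starphi_repeat (u v x : E7) : starphi0 u v x v = 0 := by
  simp only [starphi0, quad7, det4, Matrix.cons_val_zero, Matrix.cons_val_one, Matrix.head_cons,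
    Matrix.cons_val_two, Matrix.tail_cons, Matrix.cons_val_three, Matrix.of_apply,
    Matrix.cons_val', Matrix.empty_val', Matrix.cons_val_fin_one, Matrix.head_fin_const]
  ring

lemma phi0_repeat (u v : E7) : phi0 u v v = 0 := by
  simp only [phi0, tri7, Matrix.det_fin_three, Matrix.cons_val_zero, Matrix.cons_val_one,
    Matrix.head_cons, Matrix.cons_val_two, Matrix.tail_cons, Matrix.of_apply, Matrix.cons_val',
    Matrix.empty_val', Matrix.cons_val_fin_one, Matrix.head_fin_const]
  ring

/-- The fundamental contraction identity relating φ₀ and *φ₀. -/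
lemma cross_inner_cross (u v x y : E7) :
    ⟪cross u v, cross x y⟫ = ⟪u,x⟫ * ⟪v,y⟫ - ⟪u,y⟫ * ⟪v,x⟫ + starphi0 u v x y := by
  simp only [inner7, cross_apply_0, cross_apply_1, cross_apply_2, cross_apply_3,
    cross_apply_4, cross_apply_5, cross_apply_6, starphi0, quad7, det4,
    Matrix.cons_val_zero, Matrix.cons_val_one, Matrix.head_cons, Matrix.cons_val_two,
    Matrix.tail_cons, Matrix.cons_val_three, Matrix.of_apply, Matrix.cons_val',
    Matrix.empty_val', Matrix.cons_val_fin_one, Matrix.head_fin_const]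
  ring

/-- A vector orthogonal to an orthonormal family of 7 vectors in ℝ⁷ is zero. -/
lemma eq_zero_of_inner_eq_zero {c : Fin 7 → E7} (hc : Orthonormal ℝ c) {z : E7}
    (h : ∀ k, ⟪c k, z⟫ = 0) : z = 0 := by
  have card_eq : Fintype.card (Fin 7) = Module.finrank ℝ E7 := by
    simp [finrank_euclideanSpace_fin]
  let B := basisOfLinearIndependentOfCardEqFinrank hc.linearIndependent card_eq
  have hB : ⇑B = c := coe_basisOfLinearIndependentOfCardEqFinrank _ _
  apply ext_inner_left ℝ
  intro v
  rw [inner_zero_right]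
  conv_lhs => rw [← B.sum_repr v]
  rw [sum_inner]
  refine Finset.sum_eq_zero fun k _ => ?_
  rw [real_inner_smul_left]
  have : ⟪B k, z⟫ = 0 := by rw [show B k = c k from congrFun hB k]; exact h k
  rw [this, mul_zero]

/-- Determinant of an endomorphism with an orthonormal eigenbasis. -/
lemma det_eq_prod_eig (S : E7 →ₗ[ℝ] E7) {c : Fin 7 → E7} (hc : Orthonormal ℝ c)
    (ν : Fin 7 → ℝ) (h : ∀ k, S (c k) = ν k • c k) : LinearMap.det S = ∏ k, ν k := by
  have card_eq : Fintype.card (Fin 7) = Module.finrank ℝ E7 := by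
    simp [finrank_euclideanSpace_fin]
  let B := basisOfLinearIndependentOfCardEqFinrank hc.linearIndependent card_eq
  have hB : ⇑B = c := coe_basisOfLinearIndependentOfCardEqFinrank _ _
  rw [← LinearMap.det_toMatrix B]
  have hM : LinearMap.toMatrix B B S = Matrix.diagonal ν := by
    ext i k
    rw [LinearMap.toMatrix_apply]
    have hBk : B k = c k := congrFun hB k
    rw [hBk, h k, ← hBk, map_smul, B.repr_self]
    rcases eq_or_ne i k with h' | h'
    · simp [h', Matrix.diagonal, Finsupp.single_apply]
    · simp [Matrix.diagonal, Finsupp.single_apply, h', Ne.symm h']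
  rw [hM, Matrix.det_diagonal]

/-- If an invertible linear map A : ℝ⁷ → ℝ⁷ preserves the 3-form φ₀, then it also preserves
the 4-form *φ₀. -/
theorem g2_preserves_starphi0 (A : E7 →ₗ[ℝ] E7)
    (hA : Function.Bijective A)
    (hphi : ∀ u v w : E7, phi0 (A u) (A v) (A w) = phi0 u v w) :
    ∀ v₁ v₂ v₃ v₄ : E7,
      starphi0 (A v₁) (A v₂) (A v₃) (A v₄) = starphi0 v₁ v₂ v₃ v₄ := by
  have hadj : ∀ u v : E7, LinearMap.adjoint A (cross (A u) (A v)) = cross u v := by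
    intro u v
    apply ext_inner_right ℝ
    intro w
    rw [LinearMap.adjoint_inner_left, inner_cross_phi, inner_cross_phi, hphi]
  have hQsym : (A ∘ₗ LinearMap.adjoint A).IsSymmetric := by
    intro x y
    simp only [LinearMap.comp_apply]
    rw [← LinearMap.adjoint_inner_right A, ← LinearMap.adjoint_inner_left A]
  set Q : E7 →ₗ[ℝ] E7 := A ∘ₗ LinearMap.adjoint A with hQdef
  have hQapp : ∀ x, Q x = A (LinearMap.adjoint A x) := fun x => rfl
  have hEmain : ∀ u v x y : E7, ⟪Q (cross (A u) (A v)), cross (A x) (A y)⟫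
      = ⟪u,x⟫ * ⟪v,y⟫ - ⟪u,y⟫ * ⟪v,x⟫ + starphi0 u v x y := by
    intro u v x y
    rw [hQapp, hadj, ← LinearMap.adjoint_inner_right A, hadj, cross_inner_cross]
  have hrank : Module.finrank ℝ E7 = 7 := finrank_euclideanSpace_fin
  set f := hQsym.eigenvectorBasis hrank with hfdef
  set μ := hQsym.eigenvalues hrank with hμdef
  have hQf : ∀ i, Q (f i) = μ i • f i := fun i => hQsym.apply_eigenvectorBasis hrank i
  have hff : ∀ i j, ⟪f i, f j⟫ = if i = j then (1:ℝ) else 0 :=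
    orthonormal_iff_ite.mp f.orthonormal
  have hμpos : ∀ i, 0 < μ i := by
    intro i
    have h1 : ⟪Q (f i), f i⟫ = μ i := by
      rw [hQf i, real_inner_smul_left, hff]
      simp
    have h2 : ⟪Q (f i), f i⟫ = ⟪LinearMap.adjoint A (f i), LinearMap.adjoint A (f i)⟫ := by
      rw [hQapp, ← LinearMap.adjoint_inner_right A]
    have hTne : LinearMap.adjoint A (f i) ≠ 0 := by
      intro h0
      obtain ⟨w, hw⟩ := hA.surjective (f i)
      have hz : ⟪f i, f i⟫ = 0 := by
        calc ⟪f i, f i⟫ = ⟪f i, A w⟫ := by rw [hw]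
        _ = ⟪LinearMap.adjoint A (f i), w⟫ := (LinearMap.adjoint_inner_left A w (f i)).symm
        _ = 0 := by rw [h0]; exact inner_zero_left _
      have := hff i i
      rw [hz] at this
      simp at this
    have h3 : ⟪LinearMap.adjoint A (f i), LinearMap.adjoint A (f i)⟫ ≠ 0 :=
      fun hc => hTne (inner_self_eq_zero.mp hc)
    have h4 : (0:ℝ) ≤ ⟪LinearMap.adjoint A (f i), LinearMap.adjoint A (f i)⟫ :=
      real_inner_self_nonneg
    rw [← h1, h2]
    exact lt_of_le_of_ne h4 (Ne.symm h3)
  have hμne : ∀ i, μ i ≠ 0 := fun i => ne_of_gt (hμpos i)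
  set g : Fin 7 → E7 := fun i => (μ i)⁻¹ • LinearMap.adjoint A (f i) with hgdef
  have hAg : ∀ i, A (g i) = f i := by
    intro i
    have h1 : A (LinearMap.adjoint A (f i)) = μ i • f i := hQf i
    simp only [hgdef, map_smul, h1, smul_smul, inv_mul_cancel₀ (hμne i), one_smul]
  have hgg : ∀ i j, ⟪g i, g j⟫ = if i = j then (μ i)⁻¹ else 0 := by
    intro i j
    have h1 : ⟪LinearMap.adjoint A (f i), LinearMap.adjoint A (f j)⟫
        = μ j * (if i = j then (1:ℝ) else 0) := by
      rw [LinearMap.adjoint_inner_left]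
      have h2 : A (LinearMap.adjoint A (f j)) = μ j • f j := hQf j
      rw [h2, real_inner_smul_right, hff]
    simp only [hgdef, real_inner_smul_left, real_inner_smul_right, h1]
    by_cases h : i = j
    · subst h; field_simp; simp
    · simp [h]
  have hwf : ∀ l j, ⟪cross (f l) (f j), f j⟫ = 0 := by
    intro l j; rw [inner_cross_phi]; exact phi0_repeat _ _
  have hww : ∀ j l m, l ≠ j → m ≠ j →
      ⟪cross (f l) (f j), cross (f m) (f j)⟫ = if l = m then (1:ℝ) else 0 := by
    intro j l m hl hm
    rw [cross_inner_cross, starphi_repeat, hff, hff, hff]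
    simp only [if_pos rfl, if_neg hl, if_neg hm]
    by_cases h : l = m <;> simp [h]
  have hbon : ∀ j, Orthonormal ℝ (fun l => if l = j then f j else cross (f l) (f j)) := by
    intro j
    rw [orthonormal_iff_ite]
    intro l m
    by_cases hl : l = j <;> by_cases hm : m = j
    · rw [if_pos hl, if_pos hm, hff]
      simp [hl, hm]
    · rw [if_pos hl, if_neg hm, real_inner_comm, hwf m j]
      have hlm : l ≠ m := fun h => hm (by rw [← h]; exact hl)
      simp [hlm]
    · rw [if_neg hl, if_pos hm, hwf l j]
      have hlm : l ≠ m := fun h => hl (by rw [h]; exact hm)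
      simp [hlm]
    · rw [if_neg hl, if_neg hm, hww j l m hl hm]
  have hQw : ∀ j k, k ≠ j → Q (cross (f k) (f j)) = ((μ k) * (μ j))⁻¹ • cross (f k) (f j) := by
    intro j k hkj
    have hQwb : ∀ l, ⟪Q (cross (f k) (f j)), (fun l => if l = j then f j else cross (f l) (f j)) l⟫
        = if l = k then ((μ k) * (μ j))⁻¹ else 0 := by
      intro l
      dsimp only
      by_cases hl : l = j
      · rw [if_pos hl, if_neg (show l ≠ k from fun h => hkj (h.symm.trans hl))]
        rw [hQsym (cross (f k) (f j)) (f j), hQf j, real_inner_smul_right, hwf k j, mul_zero]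
      · rw [if_neg hl]
        have hrw : ⟪Q (cross (f k) (f j)), cross (f l) (f j)⟫
            = ⟪g k, g l⟫ * ⟪g j, g j⟫ - ⟪g k, g j⟫ * ⟪g j, g l⟫
              + starphi0 (g k) (g j) (g l) (g j) := by
          conv_lhs => rw [← hAg k, ← hAg j, ← hAg l]
          exact hEmain (g k) (g j) (g l) (g j)
        rw [hrw, starphi_repeat]
        simp only [hgg, if_pos rfl, if_neg hkj, if_neg (Ne.symm hl)]
        by_cases h : l = k
        · simp [h, mul_inv, mul_comm]
        · simp [h, Ne.symm h]
    have hzero : Q (cross (f k) (f j)) - ((μ k) * (μ j))⁻¹ • cross (f k) (f j) = 0 := by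
      apply eq_zero_of_inner_eq_zero (hbon j)
      intro l
      rw [inner_sub_right, real_inner_smul_right]
      have h1 : ⟪(fun l => if l = j then f j else cross (f l) (f j)) l, Q (cross (f k) (f j))⟫
          = if l = k then ((μ k) * (μ j))⁻¹ else 0 := by
        rw [real_inner_comm]; exact hQwb l
      have h2 : ⟪(fun l => if l = j then f j else cross (f l) (f j)) l, cross (f k) (f j)⟫
          = if l = k then (1:ℝ) else 0 := by
        dsimp only
        by_cases hl : l = j
        · rw [if_pos hl, real_inner_comm, hwf k j,
            if_neg (show l ≠ k from fun h => hkj (h.symm.trans hl))]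
        · rw [if_neg hl, hww j l k hl hkj]
      rw [h1, h2]
      by_cases h : l = k <;> simp [h]
    exact sub_eq_zero.mp hzero
  -- the determinant computation
  set D := LinearMap.det Q with hDdef
  have hD : D = ∏ i, μ i := det_eq_prod_eig Q f.orthonormal μ hQf
  have hDpos : 0 < D := by
    rw [hD]; exact Finset.prod_pos fun i _ => hμpos i
  have hDmu : ∀ j, D * μ j ^ 2 = 1 := by
    intro j
    set ν : Fin 7 → ℝ := fun l => if l = j then μ j else ((μ l) * (μ j))⁻¹ with hνdef
    have hQb : ∀ l, Q ((fun l => if l = j then f j else cross (f l) (f j)) l) = ν l •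
        (fun l => if l = j then f j else cross (f l) (f j)) l := by
      intro l
      dsimp only
      simp only [hνdef]
      by_cases hl : l = j
      · simp only [if_pos hl, hl]
        exact hQf j
      · simp only [if_neg hl]
        exact hQw j l hl
    have h2 : D = ∏ l, ν l := det_eq_prod_eig Q (hbon j) ν hQb
    rw [← Finset.mul_prod_erase Finset.univ ν (Finset.mem_univ j)] at h2
    have hνj : ν j = μ j := if_pos rfl
    have herase : ∀ l ∈ Finset.univ.erase j, ν l = ((μ l) * (μ j))⁻¹ :=
      fun l hl => if_neg (Finset.ne_of_mem_erase hl)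
    rw [Finset.prod_congr rfl herase, hνj] at h2
    set P := ∏ l ∈ Finset.univ.erase j, μ l with hPdef
    have hP : μ j * P = D := by
      rw [hD]; exact Finset.mul_prod_erase _ _ (Finset.mem_univ j)
    have hcard : (Finset.univ.erase j).card = 6 := by
      rw [Finset.card_erase_of_mem (Finset.mem_univ j)]
      simp
    have hprod : ∏ l ∈ Finset.univ.erase j, ((μ l) * (μ j))⁻¹ = (P * μ j ^ 6)⁻¹ := by
      rw [Finset.prod_inv_distrib, Finset.prod_mul_distrib, Finset.prod_const, hcard]
    rw [hprod] at h2
    have hPpos : 0 < P := Finset.prod_pos fun l _ => hμpos l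
    have hne6 : P * μ j ^ 6 ≠ 0 := ne_of_gt (mul_pos hPpos (pow_pos (hμpos j) 6))
    have h4 : D * (P * μ j ^ 6) = μ j := by
      calc D * (P * μ j ^ 6) = μ j * (P * μ j ^ 6)⁻¹ * (P * μ j ^ 6) := by rw [← h2]
        _ = μ j := by rw [mul_assoc, inv_mul_cancel₀ hne6, mul_one]
    have h5 : D ^ 2 * μ j ^ 6 = μ j ^ 2 := by
      linear_combination (μ j) * h4 - (D * μ j ^ 6) * hP
    have h3 : D ^ 2 * μ j ^ 4 = 1 := by
      have hc := pow_ne_zero 2 (hμne j)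
      apply mul_left_cancel₀ hc
      linear_combination h5
    have h7 : (D * μ j ^ 2 - 1) * (D * μ j ^ 2 + 1) = 0 := by
      linear_combination h3
    rcases mul_eq_zero.mp h7 with h | h
    · linarith
    · have hx : 0 < D * μ j ^ 2 := mul_pos hDpos (pow_pos (hμpos j) 2)
      linarith
  have hμeq : ∀ j, μ j = μ 0 := by
    intro j
    have h1 := hDmu j
    have h2 := hDmu 0
    have hsq : μ j ^ 2 = μ 0 ^ 2 := by
      apply mul_left_cancel₀ (ne_of_gt hDpos)
      rw [h1, h2]
    have hfac : (μ j - μ 0) * (μ j + μ 0) = 0 := by linear_combination hsq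
    rcases mul_eq_zero.mp hfac with h | h
    · linarith
    · linarith [hμpos j, hμpos 0]
  have hμ1 : ∀ i, μ i = 1 := by
    have hc9 : μ 0 ^ 9 = 1 := by
      have hD7 : D = μ 0 ^ 7 := by
        rw [hD, Finset.prod_congr rfl fun i _ => hμeq i, Finset.prod_const]
        simp
      have h0 := hDmu 0
      rw [hD7] at h0
      linear_combination h0
    have hc : μ 0 = 1 := by
      rcases lt_trichotomy (μ 0) 1 with h | h | h
      · have := pow_lt_one₀ (le_of_lt (hμpos 0)) h (by norm_num : (9:ℕ) ≠ 0)
        linarith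
      · exact h
      · have := one_lt_pow₀ h (by norm_num : (9:ℕ) ≠ 0)
        linarith
    intro i; rw [hμeq i, hc]
  have hQid : ∀ x, A (LinearMap.adjoint A x) = x := by
    have hQ1 : Q = LinearMap.id := by
      apply f.toBasis.ext
      intro i
      rw [show f.toBasis i = f i from congrFun f.coe_toBasis i, hQf i, hμ1 i, one_smul]
      rfl
    intro x
    have hx := congrFun (congrArg (DFunLike.coe) hQ1) x
    simpa [hQapp] using hx
  have hTA : ∀ x, LinearMap.adjoint A (A x) = x := fun x => hA.injective (by rw [hQid (A x)])
  have hinnerT : ∀ x y : E7, ⟪LinearMap.adjoint A x, LinearMap.adjoint A y⟫ = ⟪x, y⟫ := by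
    intro x y
    rw [LinearMap.adjoint_inner_left, hQid]
  have hinnerA : ∀ x y : E7, ⟪A x, A y⟫ = ⟪x, y⟫ := by
    intro x y
    rw [← LinearMap.adjoint_inner_right A, hTA]
  intro v₁ v₂ v₃ v₄
  have key : ⟪cross (A v₁) (A v₂), cross (A v₃) (A v₄)⟫ = ⟪cross v₁ v₂, cross v₃ v₄⟫ := by
    calc ⟪cross (A v₁) (A v₂), cross (A v₃) (A v₄)⟫
        = ⟪LinearMap.adjoint A (cross (A v₁) (A v₂)),
            LinearMap.adjoint A (cross (A v₃) (A v₄))⟫ := (hinnerT _ _).symm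
      _ = ⟪cross v₁ v₂, cross v₃ v₄⟫ := by rw [hadj, hadj]
  have e1 := cross_inner_cross (A v₁) (A v₂) (A v₃) (A v₄)
  have e2 := cross_inner_cross v₁ v₂ v₃ v₄
  rw [hinnerA, hinnerA, hinnerA, hinnerA, key] at e1
  linarith
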